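/- arXiv:2604.01611 — 4 statements merged into one kernel-verified Lean document; each statement's English description precedes it below -/
import Mathlib

section
/- Let A be an integral domain which is a unique factorization domain, let f ∈ A be a prime element, and let d ≥ 1 and N ≥ 0 be integers. Suppose M is an N×N matrix over A satisfying M^d = f · I_N (the scalar matrix with f on the diagonal). Then d divides N, and there exists a unit u ∈ A^× such that det M = u · f^(N/d). In particular det M ≠ 0, and the A-linear map A^N → A^N given by multiplication by M is injective. -/
/-- **Determinant formula.** Let `A` be a UFD (an integral domain in which every nonzero
nonunit factors into primes), `f ∈ A` a prime element, `d ≥ 1`, `N ≥ 0`, and let `M` be an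
`N × N` matrix over `A` with `M ^ d = f • 1` (the scalar matrix `f · I_N`). Then `d ∣ N`,
`det M = u * f ^ (N / d)` for some unit `u`, `det M ≠ 0`, and multiplication by `M` is an
injective `A`-linear map `A^N → A^N`. -/
theorem determinant_formula_of_clifford_relation
    {A : Type*} [CommRing A] [IsDomain A] [UniqueFactorizationMonoid A]
    (f : A) (hf : Prime f) (d N : ℕ) (hd : 1 ≤ d)
    (M : Matrix (Fin N) (Fin N) A)
    (hM : M ^ d = f • (1 : Matrix (Fin N) (Fin N) A)) :
    d ∣ N ∧ (∃ u : Aˣ, M.det = (u : A) * f ^ (N / d)) ∧ M.det ≠ 0 ∧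
      Function.Injective M.mulVecLin := by
  -- The determinant equation: (det M)^d = f^N.
  have hdet : M.det ^ d = f ^ N := by
    have := congrArg Matrix.det hM
    rwa [Matrix.det_pow, Matrix.det_smul, Matrix.det_one, mul_one, Fintype.card_fin] at this
  have hdet0 : M.det ≠ 0 := by
    intro h
    have : f ^ N = 0 := by rw [← hdet, h, zero_pow (by omega)]
    exact pow_ne_zero N hf.ne_zero this
  -- Write det M = f^k * b with f ∤ b.
  obtain ⟨b, hb, hfb⟩ :=
    (FiniteMultiplicity.of_prime_left hf hdet0).exists_eq_pow_mul_and_not_dvd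
  set k := multiplicity f M.det with hk
  -- Then f^(k*d) * b^d = f^N.
  have key : f ^ (k * d) * b ^ d = f ^ N := by
    rw [← hdet, hb, mul_pow, ← pow_mul]
  -- k * d = N.
  have hkd : k * d = N := by
    rcases lt_trichotomy (k * d) N with h | h | h
    · exfalso
      apply hfb
      have : f ^ (k * d) * b ^ d = f ^ (k * d) * f ^ (N - k * d) := by
        rw [key, ← pow_add]; congr 1; omega
      have hb' : b ^ d = f ^ (N - k * d) := by
        exact mul_left_cancel₀ (pow_ne_zero _ hf.ne_zero) this
      have : f ∣ b ^ d := hb' ▸ dvd_pow_self f (by omega)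
      exact hf.dvd_of_dvd_pow this
    · exact h
    · exfalso
      have : f ^ N * (f ^ (k * d - N) * b ^ d) = f ^ N * 1 := by
        rw [← mul_assoc, ← pow_add, mul_one]
        rw [show N + (k * d - N) = k * d by omega, key]
      have h1 : f ^ (k * d - N) * b ^ d = 1 :=
        mul_left_cancel₀ (pow_ne_zero _ hf.ne_zero) this
      have : f ∣ 1 := by
        refine dvd_trans (dvd_pow_self f (n := k * d - N) (by omega)) ⟨b ^ d, h1.symm⟩
      exact hf.not_unit (isUnit_of_dvd_one this)
  -- b^d = 1, so b is a unit.
  have hbd : b ^ d = 1 := by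
    have key' := key
    rw [hkd] at key'
    have : f ^ N * b ^ d = f ^ N * 1 := by rw [mul_one]; exact key'
    exact mul_left_cancel₀ (pow_ne_zero _ hf.ne_zero) this
  have hbu : IsUnit b := IsUnit.of_mul_eq_one (b ^ (d - 1)) (by
    rw [← pow_succ', show d - 1 + 1 = d by omega, hbd])
  have hdvd : d ∣ N := ⟨k, by rw [← hkd, mul_comm]⟩
  have hNd : N / d = k := by rw [← hkd, Nat.mul_div_cancel _ (by omega)]
  refine ⟨hdvd, ⟨hbu.unit, ?_⟩, hdet0, ?_⟩
  · rw [hb, IsUnit.unit_spec, hNd, mul_comm]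
  · -- injectivity from det ≠ 0 via the adjugate.
    intro v w hvw
    have h : ∀ v, M.adjugate.mulVec (M.mulVec v) = M.det • v := by
      intro v
      rw [Matrix.mulVec_mulVec, Matrix.adjugate_mul, Matrix.smul_mulVec,
        Matrix.one_mulVec]
    have : M.det • v = M.det • w := by
      rw [← h v, ← h w]
      simpa using congrArg M.adjugate.mulVec hvw
    funext i
    have := congrFun this i
    simp only [Pi.smul_apply, smul_eq_mul] at this
    exact mul_left_cancel₀ hdet0 this
end

section
/- Let k be a field, let n ≥ 0, d ≥ 1, t ≥ 0 be integers, and let f be a polynomial in k[x₀,…,xₙ] (multivariate polynomial ring in n+1 variables) that is irreducible and homogeneous of degree d. Suppose A₀,…,Aₙ are t×t matrices over k satisfying the generalized Clifford relation (∑_{i=0}^{n} xᵢ · C(Aᵢ))^d = f · I_t in the ring of t×t matrices over k[x₀,…,xₙ], where C(Aᵢ) denotes the matrix Aᵢ with entries regarded as constant polynomials. Then d divides t. -/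
open MvPolynomial

/-- **Rank divisibility for generalized Clifford representations.** Let `k` be a field,
`f ∈ k[x₀,…,xₙ]` irreducible and homogeneous of degree `d ≥ 1`, and suppose the `t × t`
matrices `A₀, …, Aₙ` over `k` satisfy the generalized Clifford relation
`(∑ i, xᵢ • C(Aᵢ)) ^ d = f • 1` in `Mat_t(k[x₀,…,xₙ])`. Then `d ∣ t`. -/
theorem dvd_rank_of_clifford_representation
    {k : Type*} [Field k] (n d t : ℕ) (hd : 1 ≤ d)
    (f : MvPolynomial (Fin (n + 1)) k)
    (hirr : Irreducible f) (hhom : f.IsHomogeneous d)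
    (A : Fin (n + 1) → Matrix (Fin t) (Fin t) k)
    (hA : (∑ i, (X i : MvPolynomial (Fin (n + 1)) k) • (A i).map MvPolynomial.C) ^ d
        = f • (1 : Matrix (Fin t) (Fin t) (MvPolynomial (Fin (n + 1)) k))) :
    d ∣ t := by
  rcases Nat.eq_zero_or_pos t with rfl | ht
  · exact dvd_zero d
  set M : Matrix (Fin t) (Fin t) (MvPolynomial (Fin (n + 1)) k) :=
    ∑ i, (X i : MvPolynomial (Fin (n + 1)) k) • (A i).map MvPolynomial.C with hM
  have hdet : (M.det) ^ d = f ^ t := by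
    have := congrArg Matrix.det hA
    rwa [Matrix.det_pow, Matrix.det_smul, Matrix.det_one, mul_one, Fintype.card_fin] at this
  have hf0 : f ≠ 0 := hirr.ne_zero
  have hM0 : M.det ≠ 0 := by
    intro h
    apply pow_ne_zero t hf0
    rw [← hdet, h, zero_pow (by omega)]
  have hfin : FiniteMultiplicity f M.det :=
    FiniteMultiplicity.of_not_isUnit hirr.not_isUnit hM0
  have hprime : Prime f := hirr.prime
  have h1 : emultiplicity f (M.det ^ d) = d * emultiplicity f M.det :=
    emultiplicity_pow hprime
  have h2 : emultiplicity f (f ^ t) = t := emultiplicity_pow_self_of_prime hprime t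
  rw [hdet, h2, hfin.emultiplicity_eq_multiplicity] at h1
  have : (t : ℕ∞) = (d * multiplicity f M.det : ℕ) := by
    rw [h1]; push_cast; ring
  exact ⟨multiplicity f M.det, by exact_mod_cast this⟩
end

section
/- Let A be an integral domain, let f ∈ A be a nonzero nonunit, and let d ≥ 1 and N ≥ 1 be integers. Let α be an N×N matrix over A satisfying α^d = f · I_N. Then the map α : A^N → A^N is injective, its cokernel M is a nonzero A-module annihilated by f, M is not projective, and consequently M has projective dimension exactly 1 over A (the exact sequence 0 → A^N → A^N → M → 0 is a projective resolution of minimal length). -/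
/-!
Since `α ^ d = f • 1`, the matrix `α ^ (d - 1)` is an inverse of `α` up to the factor `f`. Hence
`α` is injective because `f` is a nonzerodivisor on the free module `A^N`, and `f` kills the
cokernel `M` because `f • v = α (α ^ (d - 1) v)`. The cokernel is nonzero: otherwise `α` would be
invertible, and taking determinants in `α ^ d = f • 1` would make `f ^ N` a unit. Finally a
projective module is flat, hence torsion-free, so a nonzero module killed by a nonzerodivisor is
not projective.
-/

namespace Module

theorem not_projective_of_isRegular_of_smul_eq_zero {R M : Type*} [CommRing R] [AddCommGroup M]
    [Module R M] [Nontrivial M] {f : R} (hf : IsRegular f) (hM : ∀ x : M, f • x = 0) :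
    ¬ Projective R M := by
  intro _
  obtain ⟨x, hx⟩ := exists_ne (0 : M)
  exact hx <| IsTorsionFree.isSMulRegular hf (show f • x = f • 0 by rw [hM x, smul_zero])

end Module

namespace Matrix

variable {n R : Type*} [Fintype n] [DecidableEq n] [CommRing R] {α : Matrix n n R} {f : R} {d : ℕ}

theorem mulVec_pow_pred_mulVec_of_pow_eq_smul_one (hd : d ≠ 0) (hα : α ^ d = f • 1)
    (v : n → R) : (α ^ (d - 1)) *ᵥ (α *ᵥ v) = f • v := by
  rw [mulVec_mulVec, ← pow_succ, Nat.sub_add_cancel (Nat.one_le_iff_ne_zero.mpr hd), hα,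
    smul_mulVec, one_mulVec]

theorem mulVec_mulVec_pow_pred_of_pow_eq_smul_one (hd : d ≠ 0) (hα : α ^ d = f • 1)
    (v : n → R) : α *ᵥ ((α ^ (d - 1)) *ᵥ v) = f • v := by
  rw [mulVec_mulVec, ← pow_succ', Nat.sub_add_cancel (Nat.one_le_iff_ne_zero.mpr hd), hα,
    smul_mulVec, one_mulVec]

theorem mulVecLin_injective_of_pow_eq_smul_one (hf : IsSMulRegular (n → R) f) (hd : d ≠ 0)
    (hα : α ^ d = f • 1) : Function.Injective α.mulVecLin := by
  intro v w hvw
  apply hf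
  simp only [← mulVec_pow_pred_mulVec_of_pow_eq_smul_one hd hα]
  exact congrArg _ hvw

theorem smul_eq_zero_of_pow_eq_smul_one (hd : d ≠ 0) (hα : α ^ d = f • 1)
    (x : (n → R) ⧸ LinearMap.range α.mulVecLin) : f • x = 0 := by
  obtain ⟨v, rfl⟩ := Submodule.mkQ_surjective _ x
  rw [← map_smul, Submodule.mkQ_apply, Submodule.Quotient.mk_eq_zero,
    ← mulVec_mulVec_pow_pred_of_pow_eq_smul_one hd hα]
  exact LinearMap.mem_range_self _ _

theorem isUnit_of_pow_eq_smul_one_of_isUnit [Nonempty n] (hα : α ^ d = f • 1) (hu : IsUnit α) :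
    IsUnit f := by
  have hdet : α.det ^ d = f ^ Fintype.card n := by
    rw [← det_pow, hα, det_smul, det_one, mul_one]
  rw [← isUnit_pow_iff (Fintype.card_ne_zero (α := n)), ← hdet]
  exact ((isUnit_iff_isUnit_det α).mp hu).pow d

theorem nontrivial_coker_of_pow_eq_smul_one [Nonempty n] (hf : ¬ IsUnit f) (hα : α ^ d = f • 1) :
    Nontrivial ((n → R) ⧸ LinearMap.range α.mulVecLin) := by
  rw [Submodule.Quotient.nontrivial_iff, Ne, LinearMap.range_eq_top]
  exact fun hsurj ↦ hf <| isUnit_of_pow_eq_smul_one_of_isUnit hα <|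
    mulVec_surjective_iff_isUnit.mp hsurj

end Matrix

/-- **Projective dimension one.** Let `A` be an integral domain, `f ∈ A` a nonzero
nonunit, `d ≥ 1`, `N ≥ 1`, and let `α` be an `N × N` matrix over `A` with
`α ^ d = f • 1`. Then `α : A^N → A^N` is injective, its cokernel `M` is a nonzero
`A`-module annihilated by `f`, `M` is not projective, and consequently `M` has projective
dimension exactly `1`: the exact sequence `0 → A^N → A^N → M → 0` (injectivity of `α`
together with exactness of `A^N → A^N → M → 0`) is a projective resolution of minimal
length. -/
theorem coker_pd_one_of_clifford_relation
    {A : Type*} [CommRing A] [IsDomain A]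
    (f : A) (hf0 : f ≠ 0) (hfu : ¬ IsUnit f)
    (d N : ℕ) (hd : 1 ≤ d) (hN : 1 ≤ N)
    (α : Matrix (Fin N) (Fin N) A)
    (hα : α ^ d = f • (1 : Matrix (Fin N) (Fin N) A)) :
    Function.Injective α.mulVecLin ∧
    Nontrivial ((Fin N → A) ⧸ LinearMap.range α.mulVecLin) ∧
    (∀ x : (Fin N → A) ⧸ LinearMap.range α.mulVecLin, f • x = 0) ∧
    ¬ Module.Projective A ((Fin N → A) ⧸ LinearMap.range α.mulVecLin) ∧
    Function.Exact α.mulVecLin (LinearMap.range α.mulVecLin).mkQ ∧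
    Function.Surjective (LinearMap.range α.mulVecLin).mkQ := by
  have hreg : IsRegular f := .of_ne_zero hf0
  have hd0 : d ≠ 0 := Nat.one_le_iff_ne_zero.mp hd
  have : Nonempty (Fin N) := Fin.pos_iff_nonempty.mp hN
  have hann := Matrix.smul_eq_zero_of_pow_eq_smul_one hd0 hα
  have hnt := Matrix.nontrivial_coker_of_pow_eq_smul_one hfu hα
  exact ⟨Matrix.mulVecLin_injective_of_pow_eq_smul_one
      (Module.IsTorsionFree.isSMulRegular hreg) hd0 hα,
    hnt, hann, Module.not_projective_of_isRegular_of_smul_eq_zero hreg hann,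
    LinearMap.exact_map_mkQ_range _, Submodule.mkQ_surjective _⟩
end

section
/- Let R be a commutative ring and let l₀, l₁, l₂, l₃ ∈ R be elements generating the unit ideal of R. Set f = l₀·l₃ − l₁·l₂ and S = R/(f), and let φ be the 2×2 matrix over S whose rows are (l̄₀, l̄₁) and (l̄₂, l̄₃), where l̄ᵢ denotes the image of lᵢ in S. Then the cokernel M of the S-linear map φ : S² → S² is a finitely generated projective S-module such that for every prime ideal p of S, the localization M_p is a free S_p-module of rank 1; that is, M is an invertible S-module. -/
open Matrix

set_option maxHeartbeats 1000000

section AuxLemmas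

private lemma funext_fin2 {A : Type*} {x y : Fin 2 → A} (h0 : x 0 = y 0) (h1 : x 1 = y 1) :
    x = y := by
  funext k; fin_cases k; exacts [h0, h1]

lemma quot_span_singleton_equiv {A : Type*} [CommRing A] (w : Fin 2 → A)
    (i j : Fin 2) (hij : i ≠ j) (hcov : ∀ k : Fin 2, k = i ∨ k = j)
    (hu : IsUnit (w i)) :
    Nonempty (((Fin 2 → A) ⧸ Submodule.span A {w}) ≃ₗ[A] A) := by
  obtain ⟨v, hv⟩ := hu.exists_left_inv
  let g : (Fin 2 → A) →ₗ[A] A := w i • LinearMap.proj j - w j • LinearMap.proj i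
  have hg : ∀ x : Fin 2 → A, g x = w i * x j - w j * x i := fun x => rfl
  have hsurj : Function.Surjective g := by
    intro y
    refine ⟨Pi.single j (v * y), ?_⟩
    rw [hg, Pi.single_eq_same, Pi.single_eq_of_ne hij]
    linear_combination y * hv
  have hker : Submodule.span A {w} = LinearMap.ker g := by
    apply le_antisymm
    · rw [Submodule.span_le, Set.singleton_subset_iff]
      simp only [SetLike.mem_coe, LinearMap.mem_ker, hg]
      ring
    · intro x hx
      rw [LinearMap.mem_ker, hg, sub_eq_zero] at hx
      rw [Submodule.mem_span_singleton]
      refine ⟨v * x i, funext fun k => ?_⟩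
      rcases hcov k with rfl | rfl
      · simp only [Pi.smul_apply, smul_eq_mul]
        linear_combination x k * hv
      · simp only [Pi.smul_apply, smul_eq_mul]
        linear_combination v * hx.symm + x k * hv
  exact ⟨(Submodule.quotEquivOfEq _ _ hker).trans (g.quotKerEquivOfSurjective hsurj)⟩

lemma coker_mulVecLin_equiv {A : Type*} [CommRing A] (ψ : Matrix (Fin 2) (Fin 2) A)
    (hdet : ψ.det = 0)
    (h : IsUnit (ψ 0 0) ∨ IsUnit (ψ 0 1) ∨ IsUnit (ψ 1 0) ∨ IsUnit (ψ 1 1)) :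
    Nonempty (((Fin 2 → A) ⧸ LinearMap.range ψ.mulVecLin) ≃ₗ[A] A) := by
  rw [Matrix.det_fin_two] at hdet
  have hrange : LinearMap.range ψ.mulVecLin = Submodule.span A (Set.range ψᵀ) :=
    Matrix.range_mulVecLin ψ
  have hspan : ∀ (c : Fin 2) (r : A), r • ψᵀ c = ψᵀ (1 - c) →
      Submodule.span A (Set.range ψᵀ) = Submodule.span A {ψᵀ c} := by
    intro c r hr
    apply le_antisymm
    · rw [Submodule.span_le]
      rintro _ ⟨k, rfl⟩
      rcases (by fin_cases k <;> fin_cases c <;> decide : k = c ∨ k = 1 - c) with rfl | rfl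
      · exact Submodule.subset_span rfl
      · exact Submodule.mem_span_singleton.2 ⟨r, hr⟩
    · exact Submodule.span_mono (Set.singleton_subset_iff.2 ⟨c, rfl⟩)
  rcases h with hu | hu | hu | hu
  · obtain ⟨v, hv⟩ := hu.exists_left_inv
    rw [hrange, hspan 0 (v * ψ 0 1) (funext_fin2
      (show v * ψ 0 1 * ψ 0 0 = ψ 0 1 by linear_combination ψ 0 1 * hv)
      (show v * ψ 0 1 * ψ 1 0 = ψ 1 1 by linear_combination ψ 1 1 * hv - v * hdet))]
    exact quot_span_singleton_equiv _ 0 1 (by decide)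
      (fun k => by fin_cases k <;> simp) hu
  · obtain ⟨v, hv⟩ := hu.exists_left_inv
    rw [hrange, hspan 1 (v * ψ 0 0) (funext_fin2
      (show v * ψ 0 0 * ψ 0 1 = ψ 0 0 by linear_combination ψ 0 0 * hv)
      (show v * ψ 0 0 * ψ 1 1 = ψ 1 0 by linear_combination v * hdet + ψ 1 0 * hv))]
    exact quot_span_singleton_equiv _ 0 1 (by decide)
      (fun k => by fin_cases k <;> simp) hu
  · obtain ⟨v, hv⟩ := hu.exists_left_inv
    rw [hrange, hspan 0 (v * ψ 1 1) (funext_fin2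
      (show v * ψ 1 1 * ψ 0 0 = ψ 0 1 by linear_combination v * hdet + ψ 0 1 * hv)
      (show v * ψ 1 1 * ψ 1 0 = ψ 1 1 by linear_combination ψ 1 1 * hv))]
    exact quot_span_singleton_equiv _ 1 0 (by decide)
      (fun k => by fin_cases k <;> simp) hu
  · obtain ⟨v, hv⟩ := hu.exists_left_inv
    rw [hrange, hspan 1 (v * ψ 1 0) (funext_fin2
      (show v * ψ 1 0 * ψ 0 1 = ψ 0 0 by linear_combination ψ 0 0 * hv - v * hdet)
      (show v * ψ 1 0 * ψ 1 1 = ψ 1 0 by linear_combination ψ 1 0 * hv))]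
    exact quot_span_singleton_equiv _ 1 0 (by decide)
      (fun k => by fin_cases k <;> simp) hu


section Bridge

variable {S : Type*} [CommRing S] (p : Submonoid S)

/-- The componentwise localization map `(Fin 2 → S) →ₗ[S] (Fin 2 → Localization p)`. -/
noncomputable def piLocMap : (Fin 2 → S) →ₗ[S] (Fin 2 → Localization p) :=
  (Finsupp.linearEquivFunOnFinite S (Localization p) (Fin 2) :
      (Fin 2 →₀ Localization p) ≃ₗ[S] (Fin 2 → Localization p)).toLinearMap ∘ₗ
    ((Finsupp.mapRange.linearMap (Algebra.linearMap S (Localization p))) ∘ₗ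
      ((Finsupp.linearEquivFunOnFinite S S (Fin 2)).symm :
        (Fin 2 → S) ≃ₗ[S] (Fin 2 →₀ S)).toLinearMap)

instance : IsLocalizedModule p (piLocMap p) := by
  unfold piLocMap
  infer_instance

@[simp] lemma piLocMap_apply (x : Fin 2 → S) (k : Fin 2) :
    piLocMap p x k = algebraMap S (Localization p) (x k) := by
  simp [piLocMap, Finsupp.linearEquivFunOnFinite]
  rfl

end Bridge

end AuxLemmas


section

variable {R : Type*} [CommRing R] (l₀ l₁ l₂ l₃ : R)

/-- The quotient ring `S = R/(f)` where `f = l₀l₃ − l₁l₂`. -/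
abbrev quadricRing : Type _ := R ⧸ Ideal.span {l₀ * l₃ - l₁ * l₂}

/-- The quotient map `R → S`. -/
abbrev quadricMk : R →+* quadricRing l₀ l₁ l₂ l₃ :=
  Ideal.Quotient.mk (Ideal.span {l₀ * l₃ - l₁ * l₂})

/-- The `2 × 2` matrix `φ` over `S` with rows `(l̄₀, l̄₁)` and `(l̄₂, l̄₃)`. -/
def quadricMatrix : Matrix (Fin 2) (Fin 2) (quadricRing l₀ l₁ l₂ l₃) :=
  !![quadricMk l₀ l₁ l₂ l₃ l₀, quadricMk l₀ l₁ l₂ l₃ l₁;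
     quadricMk l₀ l₁ l₂ l₃ l₂, quadricMk l₀ l₁ l₂ l₃ l₃]

/-- The cokernel `M` of the `S`-linear map `φ : S² → S²`. -/
abbrev quadricCoker : Type _ :=
  (Fin 2 → quadricRing l₀ l₁ l₂ l₃) ⧸
    LinearMap.range (quadricMatrix l₀ l₁ l₂ l₃).mulVecLin


private lemma quadricCoker_localization {R : Type*} [CommRing R] (l₀ l₁ l₂ l₃ : R) (hunit : Ideal.span {l₀, l₁, l₂, l₃} = (⊤ : Ideal R))
    (p : Ideal (quadricRing l₀ l₁ l₂ l₃)) [hp : p.IsPrime] :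
    Nonempty ((LocalizedModule p.primeCompl (quadricCoker l₀ l₁ l₂ l₃)) ≃ₗ[Localization p.primeCompl]
        (Localization p.primeCompl)) := by
  set S := quadricRing l₀ l₁ l₂ l₃
  set Aₚ : Type _ := Localization p.primeCompl with hA
  set φ := quadricMatrix l₀ l₁ l₂ l₃ with hφ
  set ψ := φ.map (algebraMap S Aₚ) with hψ
  -- determinant of φ is zero
  have hdetφ : φ.det = 0 := by
    rw [hφ, quadricMatrix, Matrix.det_fin_two_of, ← _root_.map_mul, ← _root_.map_mul,
      ← map_sub, Ideal.Quotient.eq_zero_iff_mem]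
    exact Ideal.mem_span_singleton_self _
  have hdet : ψ.det = 0 := by
    have := (RingHom.map_det (algebraMap S Aₚ) φ).symm
    rw [hψ]
    show ((algebraMap S Aₚ).mapMatrix φ).det = 0
    rw [this, hdetφ, map_zero]
  -- some generator is invertible in Aₚ
  have hgen : quadricMk l₀ l₁ l₂ l₃ l₀ ∉ p ∨ quadricMk l₀ l₁ l₂ l₃ l₁ ∉ p ∨
      quadricMk l₀ l₁ l₂ l₃ l₂ ∉ p ∨ quadricMk l₀ l₁ l₂ l₃ l₃ ∉ p := by
    by_contra h
    push_neg at h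
    obtain ⟨h0, h1, h2, h3⟩ := h
    have h1' : (1 : S) ∈ Ideal.map (quadricMk l₀ l₁ l₂ l₃) (Ideal.span {l₀, l₁, l₂, l₃}) := by
      rw [hunit]
      exact Ideal.mem_map_of_mem _ Submodule.mem_top
    rw [Ideal.map_span] at h1'
    have hle : Ideal.span ((quadricMk l₀ l₁ l₂ l₃) '' {l₀, l₁, l₂, l₃}) ≤ p := by
      rw [Ideal.span_le]
      rintro _ ⟨x, hx, rfl⟩
      simp only [Set.mem_insert_iff, Set.mem_singleton_iff] at hx
      rcases hx with rfl | rfl | rfl | rfl <;> assumption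
    exact hp.ne_top ((Ideal.eq_top_iff_one p).2 (hle h1'))
  have hunit' : IsUnit (ψ 0 0) ∨ IsUnit (ψ 0 1) ∨ IsUnit (ψ 1 0) ∨ IsUnit (ψ 1 1) := by
    have : ∀ x : S, x ∉ p → IsUnit (algebraMap S Aₚ x) := fun x hx =>
      IsLocalization.map_units Aₚ (⟨x, hx⟩ : p.primeCompl)
    have e00 : ψ 0 0 = algebraMap S Aₚ (quadricMk l₀ l₁ l₂ l₃ l₀) := by
      simp [hψ, hφ, quadricMatrix]
    have e01 : ψ 0 1 = algebraMap S Aₚ (quadricMk l₀ l₁ l₂ l₃ l₁) := by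
      simp [hψ, hφ, quadricMatrix]
    have e10 : ψ 1 0 = algebraMap S Aₚ (quadricMk l₀ l₁ l₂ l₃ l₂) := by
      simp [hψ, hφ, quadricMatrix]
    have e11 : ψ 1 1 = algebraMap S Aₚ (quadricMk l₀ l₁ l₂ l₃ l₃) := by
      simp [hψ, hφ, quadricMatrix]
    rcases hgen with h | h | h | h
    · exact Or.inl (e00 ▸ this _ h)
    · exact Or.inr (Or.inl (e01 ▸ this _ h))
    · exact Or.inr (Or.inr (Or.inl (e10 ▸ this _ h)))
    · exact Or.inr (Or.inr (Or.inr (e11 ▸ this _ h)))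
  let fℓ := piLocMap (S := S) p.primeCompl
  have hloc : (LinearMap.range φ.mulVecLin).localized' Aₚ p.primeCompl fℓ
      = LinearMap.range ψ.mulVecLin := by
    rw [Matrix.range_mulVecLin, Submodule.localized'_span, Matrix.range_mulVecLin]
    congr 1
    rw [← Set.range_comp]
    refine congrArg _ (funext fun j => funext fun k => ?_)
    simp [fℓ, hψ, Matrix.transpose_apply, Matrix.map_apply]
    rfl
  let q := (LinearMap.range φ.mulVecLin).toLocalizedQuotient' Aₚ p.primeCompl fℓ
  haveI : IsLocalizedModule p.primeCompl q :=
    IsLocalizedModule.toLocalizedQuotient' Aₚ p.primeCompl fℓ _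
  let E1 : LocalizedModule p.primeCompl (quadricCoker l₀ l₁ l₂ l₃) ≃ₗ[S]
      ((Fin 2 → Aₚ) ⧸ (LinearMap.range φ.mulVecLin).localized' Aₚ p.primeCompl fℓ) :=
    IsLocalizedModule.iso p.primeCompl q
  let E2 : ((Fin 2 → Aₚ) ⧸ (LinearMap.range φ.mulVecLin).localized' Aₚ p.primeCompl fℓ)
      ≃ₗ[Aₚ] ((Fin 2 → Aₚ) ⧸ LinearMap.range ψ.mulVecLin) :=
    Submodule.quotEquivOfEq _ _ hloc
  obtain ⟨E3⟩ := coker_mulVecLin_equiv ψ hdet hunit'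
  let E : LocalizedModule p.primeCompl (quadricCoker l₀ l₁ l₂ l₃) ≃ₗ[S] Aₚ :=
    E1.trans ((E2.trans E3).restrictScalars S)
  exact ⟨{ E.toLinearMap.extendScalarsOfIsLocalization p.primeCompl Aₚ with
           invFun := E.symm, left_inv := E.left_inv, right_inv := E.right_inv }⟩


/-- **A rank-one matrix-factorization module on a quadric.** Let `R` be a commutative
ring and `l₀, l₁, l₂, l₃ ∈ R` generate the unit ideal. Set `f = l₀l₃ − l₁l₂`,
`S = R/(f)`, and let `φ` be the `2 × 2` matrix over `S` with rows `(l̄₀, l̄₁)` and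
`(l̄₂, l̄₃)`. Then the cokernel `M` of `φ : S² → S²` is a finitely generated projective
`S`-module such that for every prime ideal `p` of `S` the localization `M_p` is a free
`S_p`-module of rank `1`; that is, `M` is an invertible `S`-module. -/
theorem quadricCoker_invertible
    (hunit : Ideal.span {l₀, l₁, l₂, l₃} = (⊤ : Ideal R)) :
    Module.Finite (quadricRing l₀ l₁ l₂ l₃) (quadricCoker l₀ l₁ l₂ l₃) ∧
    Module.Projective (quadricRing l₀ l₁ l₂ l₃) (quadricCoker l₀ l₁ l₂ l₃) ∧
    ∀ (p : Ideal (quadricRing l₀ l₁ l₂ l₃)) [p.IsPrime],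
      Nonempty ((LocalizedModule p.primeCompl (quadricCoker l₀ l₁ l₂ l₃)) ≃ₗ[Localization p.primeCompl]
        (Localization p.primeCompl)) := by
  have key : ∀ (p : Ideal (quadricRing l₀ l₁ l₂ l₃)) [p.IsPrime],
      Nonempty ((LocalizedModule p.primeCompl (quadricCoker l₀ l₁ l₂ l₃))
        ≃ₗ[Localization p.primeCompl] (Localization p.primeCompl)) :=
    fun p _ => quadricCoker_localization l₀ l₁ l₂ l₃ hunit p
  haveI hfp : Module.FinitePresentation (quadricRing l₀ l₁ l₂ l₃) (quadricCoker l₀ l₁ l₂ l₃) :=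
    Module.finitePresentation_of_surjective (Submodule.mkQ _) (Submodule.mkQ_surjective _)
      (by rw [Submodule.ker_mkQ, Matrix.range_mulVecLin]
          exact Submodule.fg_span (Set.finite_range _))
  refine ⟨inferInstance, ?_, key⟩
  apply Module.projective_of_localization_maximal
  intro I hI
  haveI := hI.isPrime
  obtain ⟨e⟩ := key I
  exact Module.Projective.of_equiv e.symm

end
end
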